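/- arXiv:2303.12819 — 2 statements merged into one kernel-verified Lean document; each statement's English description precedes it below -/
import Mathlib

section
/- Let R₁ and R₂ be invertible Hermitian trace-one operators on a finite-dimensional complex Hilbert space and let α ∈ [0,1]. Then α·S(R₁) + (1−α)·S(R₂) ≤ S̃(α|R₁| + (1−α)|R₂|), where |R| = √(R†R), S(R) = −Tr(|R| log|R|), and for a positive definite operator A, S̃(A) = −Tr(A log A) with log the matrix logarithm by functional calculus. -/
/-!
Invertibility makes `|R₁|` and `|R₂|` positive definite, hence also their convex combination `C`.
Klein's inequality `Tr A - Tr C + Tr (A log C) ≤ Tr (A log A)`, applied to `A = |R₁|` and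
`A = |R₂|` and weighted by `α` and `1 - α`, gives the claim, because the weighted left-hand sides
add up to exactly `Tr (C log C)`. In eigenbases `A = Σ aᵢ uᵢuᵢ*`, `C = Σ cⱼ vⱼvⱼ*`, Klein's
inequality is the scalar inequality `a - c + a log c ≤ a log a` averaged with the doubly
stochastic weights `|⟨uᵢ, vⱼ⟩|²`.
-/

open Matrix
open scoped ComplexOrder

/-- `|R| = √(Rᴴ R)`, the positive semidefinite absolute value of a matrix. -/
noncomputable def absM {n : ℕ} (R : Matrix (Fin n) (Fin n) ℂ) :
    Matrix (Fin n) (Fin n) ℂ :=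
  (Matrix.posSemidef_conjTranspose_mul_self R).1.eigenvectorUnitary.1 *
    diagonal (((↑) : ℝ → ℂ) ∘ Real.sqrt ∘ (Matrix.posSemidef_conjTranspose_mul_self R).1.eigenvalues) *
    (star (Matrix.posSemidef_conjTranspose_mul_self R).1.eigenvectorUnitary : Matrix (Fin n) (Fin n) ℂ)

/-- The matrix logarithm via the continuous functional calculus. -/
noncomputable def matLog {n : ℕ} (A : Matrix (Fin n) (Fin n) ℂ) :
    Matrix (Fin n) (Fin n) ℂ :=
  cfc Real.log A

lemma sub_add_mul_log_le_mul_log {a c : ℝ} (ha : 0 < a) (hc : 0 < c) :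
    a - c + a * Real.log c ≤ a * Real.log a := by
  have h := Real.log_le_sub_one_of_pos (div_pos hc ha)
  rw [Real.log_div hc.ne' ha.ne', le_sub_iff_add_le, le_div_iff₀ ha] at h
  linarith

lemma sum_sub_sum_add_sum_mul_log_le_of_mem_doublyStochastic {ι : Type*} [Fintype ι]
    [DecidableEq ι] {a c : ι → ℝ} {p : Matrix ι ι ℝ} (hp : p ∈ doublyStochastic ℝ ι)
    (ha : ∀ i, 0 < a i) (hc : ∀ j, 0 < c j) :
    ∑ i, a i - ∑ j, c j + ∑ i, ∑ j, a i * Real.log (c j) * p i j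
      ≤ ∑ i, a i * Real.log (a i) := by
  have sum_eq_row_weighted (x : ι → ℝ) : ∑ i, x i = ∑ i, ∑ j, x i * p i j := by
    simp only [← Finset.mul_sum, sum_row_of_mem_doublyStochastic hp, mul_one]
  have sum_eq_col_weighted (y : ι → ℝ) : ∑ j, y j = ∑ i, ∑ j, y j * p i j := by
    rw [Finset.sum_comm]
    simp only [← Finset.mul_sum, sum_col_of_mem_doublyStochastic hp, mul_one]
  rw [sum_eq_row_weighted a, sum_eq_col_weighted c,
    sum_eq_row_weighted fun i => a i * Real.log (a i),
    ← Finset.sum_sub_distrib, ← Finset.sum_add_distrib]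
  gcongr with i _
  rw [← Finset.sum_sub_distrib, ← Finset.sum_add_distrib]
  gcongr with j _
  nlinarith [sub_add_mul_log_le_mul_log (ha i) (hc j),
    nonneg_of_mem_doublyStochastic hp (i := i) (j := j)]

namespace Matrix

variable {ι : Type*}

lemma PosDef.smul_add_one_sub_smul {A B : Matrix ι ι ℂ} (hA : A.PosDef) (hB : B.PosDef)
    {α : ℝ} (hα₀ : 0 ≤ α) (hα₁ : α ≤ 1) : ((α : ℂ) • A + (1 - (α : ℂ)) • B).PosDef := by
  rcases hα₁.lt_or_eq with hα₁ | rfl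
  · have hβ : (0 : ℂ) < 1 - (α : ℂ) := by
      rw [← Complex.ofReal_one, ← Complex.ofReal_sub]
      exact_mod_cast sub_pos.2 hα₁
    exact PosDef.posSemidef_add (hA.posSemidef.smul (by exact_mod_cast hα₀)) (hB.smul hβ)
  · simpa using hA

variable [Fintype ι] [DecidableEq ι]

lemma normSq_mem_doublyStochastic {W : Matrix ι ι ℂ} (hW : W ∈ unitaryGroup ι ℂ) :
    of (fun i j => Complex.normSq (W i j)) ∈ doublyStochastic ℝ ι := by
  refine mem_doublyStochastic_iff_sum.2
    ⟨fun i j => Complex.normSq_nonneg _, fun i => ?_, fun j => ?_⟩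
  · have := congrFun₂ (mem_unitaryGroup_iff.1 hW) i i
    simp only [mul_apply, star_apply, one_apply_eq, RCLike.star_def, Complex.mul_conj] at this
    exact_mod_cast this
  · have := congrFun₂ (mem_unitaryGroup_iff'.1 hW) j j
    simp only [mul_apply, star_apply, one_apply_eq, RCLike.star_def,
      mul_comm (starRingEnd ℂ _), Complex.mul_conj] at this
    exact_mod_cast this

lemma trace_diagonal_mul_mul_diagonal_mul_star (d e : ι → ℂ) (W : Matrix ι ι ℂ) :
    (diagonal d * W * diagonal e * star W).trace
      = ∑ i, ∑ j, d i * e j * Complex.normSq (W i j) := by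
  simp only [trace, diag, mul_apply (M := diagonal d * W * diagonal e)]
  simp only [mul_diagonal, diagonal_mul, star_apply, RCLike.star_def]
  refine Finset.sum_congr rfl fun i _ => Finset.sum_congr rfl fun j _ => ?_
  rw [Complex.normSq_eq_conj_mul_self]
  ring

namespace IsHermitian

variable {A C : Matrix ι ι ℂ}

/-- `|⟨uᵢ, vⱼ⟩|²` for the eigenvector bases `u` of `A` and `v` of `C`. -/
noncomputable def eigenbasisOverlap (hA : A.IsHermitian) (hC : C.IsHermitian) :
    Matrix ι ι ℝ :=
  of fun i j => Complex.normSq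
    ((star (hA.eigenvectorUnitary : Matrix ι ι ℂ) * hC.eigenvectorUnitary) i j)

lemma eigenbasisOverlap_mem_doublyStochastic (hA : A.IsHermitian) (hC : C.IsHermitian) :
    hA.eigenbasisOverlap hC ∈ doublyStochastic ℝ ι :=
  normSq_mem_doublyStochastic
    (mul_mem (Unitary.star_mem hA.eigenvectorUnitary.2) hC.eigenvectorUnitary.2)

lemma eigenbasisOverlap_self (hA : A.IsHermitian) : hA.eigenbasisOverlap hA = 1 := by
  ext i j
  simp only [eigenbasisOverlap, of_apply, Unitary.star_mul_self_of_mem hA.eigenvectorUnitary.2]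
  rw [one_apply, one_apply]
  split_ifs <;> simp

lemma trace_cfc_mul_cfc (hA : A.IsHermitian) (hC : C.IsHermitian) (f g : ℝ → ℝ) :
    (cfc f A * cfc g C).trace = ((∑ i, ∑ j,
      f (hA.eigenvalues i) * g (hC.eigenvalues j) * hA.eigenbasisOverlap hC i j : ℝ) : ℂ) := by
  set U : Matrix ι ι ℂ := (hA.eigenvectorUnitary : Matrix ι ι ℂ)
  set V : Matrix ι ι ℂ := (hC.eigenvectorUnitary : Matrix ι ι ℂ)
  have hU : U * star U = 1 := Unitary.mul_star_self_of_mem hA.eigenvectorUnitary.2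
  have conj_mul_conj : cfc f A * cfc g C =
      U * (diagonal (RCLike.ofReal ∘ f ∘ hA.eigenvalues) * (star U * V) *
        diagonal (RCLike.ofReal ∘ g ∘ hC.eigenvalues) * star (star U * V)) * star U := by
    simp only [hA.cfc_eq, hC.cfc_eq, IsHermitian.cfc, Unitary.conjStarAlgAut_apply, star_mul,
      star_star, Matrix.mul_assoc, hU, Matrix.mul_one]
    rfl
  rw [conj_mul_conj, trace_mul_cycle, Unitary.star_mul_self_of_mem hA.eigenvectorUnitary.2,
    Matrix.one_mul, trace_diagonal_mul_mul_diagonal_mul_star]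
  push_cast
  rfl

lemma trace_mul_cfc (hA : A.IsHermitian) (hC : C.IsHermitian) (g : ℝ → ℝ) :
    (A * cfc g C).trace = ((∑ i, ∑ j,
      hA.eigenvalues i * g (hC.eigenvalues j) * hA.eigenbasisOverlap hC i j : ℝ) : ℂ) := by
  have := trace_cfc_mul_cfc hA hC id g
  rwa [cfc_id ℝ A hA.isSelfAdjoint] at this

end IsHermitian

variable {A B C : Matrix ι ι ℂ}

theorem PosDef.trace_sub_trace_add_trace_mul_log_le (hA : A.PosDef) (hC : C.PosDef) :
    A.trace - C.trace + (A * cfc Real.log C).trace ≤ (A * cfc Real.log A).trace := by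
  rw [hA.1.trace_eq_sum_eigenvalues, hC.1.trace_eq_sum_eigenvalues,
    IsHermitian.trace_mul_cfc hA.1 hC.1, IsHermitian.trace_mul_cfc hA.1 hA.1,
    hA.1.eigenbasisOverlap_self]
  simp only [one_apply, mul_ite, mul_one, mul_zero, Finset.sum_ite_eq, Finset.mem_univ, if_true,
    RCLike.ofReal_eq_complex_ofReal]
  exact_mod_cast sum_sub_sum_add_sum_mul_log_le_of_mem_doublyStochastic
    (hA.1.eigenbasisOverlap_mem_doublyStochastic hC.1) hA.eigenvalues_pos hC.eigenvalues_pos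

theorem PosDef.concave_neg_trace_mul_log (hA : A.PosDef) (hB : B.PosDef)
    {α : ℝ} (hα₀ : 0 ≤ α) (hα₁ : α ≤ 1) :
    (α : ℂ) * (-(A * cfc Real.log A).trace) + (1 - (α : ℂ)) * (-(B * cfc Real.log B).trace) ≤
      -((((α : ℂ) • A + (1 - (α : ℂ)) • B) *
        cfc Real.log ((α : ℂ) • A + (1 - (α : ℂ)) • B)).trace) := by
  set C := (α : ℂ) • A + (1 - (α : ℂ)) • B with hC_def
  have hC : C.PosDef := hA.smul_add_one_sub_smul hB hα₀ hα₁
  set L := cfc Real.log C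
  have trace_C : C.trace = α * A.trace + (1 - α) * B.trace := by
    simp only [hC_def, trace_add, trace_smul, smul_eq_mul]
  have trace_C_mul : (C * L).trace = α * (A * L).trace + (1 - α) * (B * L).trace := by
    simp only [hC_def, add_mul, smul_mul, trace_add, trace_smul, smul_eq_mul]
  have hα : (0 : ℂ) ≤ α := by exact_mod_cast hα₀
  have hβ : (0 : ℂ) ≤ 1 - α := by
    rw [← Complex.ofReal_one, ← Complex.ofReal_sub]
    exact_mod_cast sub_nonneg.2 hα₁
  calc (α : ℂ) * (-(A * cfc Real.log A).trace) + (1 - (α : ℂ)) * (-(B * cfc Real.log B).trace)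
      ≤ α * -(A.trace - C.trace + (A * L).trace)
          + (1 - α) * -(B.trace - C.trace + (B * L).trace) := by
        gcongr
        exacts [hA.trace_sub_trace_add_trace_mul_log_le hC,
          hB.trace_sub_trace_add_trace_mul_log_le hC]
    _ = -(C * L).trace := by rw [trace_C_mul, trace_C]; ring

end Matrix

lemma posDef_absM {n : ℕ} {R : Matrix (Fin n) (Fin n) ℂ} (hR : IsUnit R) : (absM R).PosDef := by
  have hRR : (Rᴴ * R).PosDef := PosDef.conjTranspose_mul_self R (mulVec_injective_of_isUnit hR)
  have hsqrt : (diagonal (((↑) : ℝ → ℂ) ∘ Real.sqrt ∘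
      (posSemidef_conjTranspose_mul_self R).1.eigenvalues)).PosDef :=
    PosDef.diagonal fun i => Complex.zero_lt_real.mpr (Real.sqrt_pos.mpr (hRR.eigenvalues_pos i))
  exact hsqrt.mul_mul_conjTranspose_same (vecMul_injective_of_isUnit Unitary.isUnit_coe)

theorem spacetime_entropy_weak_concavity_general
    (n : ℕ) (R₁ R₂ : Matrix (Fin n) (Fin n) ℂ)
    (hu₁ : IsUnit R₁) (hu₂ : IsUnit R₂)
    (α : ℝ) (hα₀ : 0 ≤ α) (hα₁ : α ≤ 1) :
    (α : ℂ) * (-(absM R₁ * matLog (absM R₁)).trace) +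
        (1 - (α : ℂ)) * (-(absM R₂ * matLog (absM R₂)).trace) ≤
      -((((α : ℂ) • absM R₁ + (1 - (α : ℂ)) • absM R₂) *
          matLog ((α : ℂ) • absM R₁ + (1 - (α : ℂ)) • absM R₂)).trace) :=
  (posDef_absM hu₁).concave_neg_trace_mul_log (posDef_absM hu₂) hα₀ hα₁

/-- weak concavity of space-time entropy: for invertible
Hermitian trace-one `R₁, R₂` and `α ∈ [0,1]`,
`α S(R₁) + (1−α) S(R₂) ≤ S̃(α|R₁| + (1−α)|R₂|)`, where
`S(R) = −Tr(|R| log|R|)` and `S̃(A) = −Tr(A log A)`. -/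
theorem spacetime_entropy_weak_concavity
    (n : ℕ) (R₁ R₂ : Matrix (Fin n) (Fin n) ℂ)
    (h₁ : R₁.IsHermitian) (h₂ : R₂.IsHermitian)
    (hTr₁ : R₁.trace = 1) (hTr₂ : R₂.trace = 1)
    (hu₁ : IsUnit R₁) (hu₂ : IsUnit R₂)
    (α : ℝ) (hα₀ : 0 ≤ α) (hα₁ : α ≤ 1) :
    (α : ℂ) * (-(absM R₁ * matLog (absM R₁)).trace) +
        (1 - (α : ℂ)) * (-(absM R₂ * matLog (absM R₂)).trace) ≤
      -((((α : ℂ) • absM R₁ + (1 - (α : ℂ)) • absM R₂) *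
          matLog ((α : ℂ) • absM R₁ + (1 - (α : ℂ)) • absM R₂)).trace) :=
  spacetime_entropy_weak_concavity_general n R₁ R₂ hu₁ hu₂ α hα₀ hα₁
end

section
/- Fix d ≥ 1. Let I_A and I_B be finite 'input' and 'output' index sets, let 𝒜₁, …, 𝒜_k ⊆ I_A and ℬ₁, …, ℬ_k ⊆ I_B with ∪_i 𝒜_i = I_A and ∪_i ℬ_i = I_B, and for subsets 𝒜 ⊆ I_A, ℬ ⊆ I_B write H_{ℬ,𝒜} = (⊗_{b∈ℬ} ℂ^d) ⊗ (⊗_{a∈𝒜} ℂ^d). For each i let J_i be a Hermitian trace-one operator on H_{ℬ_i,𝒜_i} satisfying the trace-preservation condition Tr_{ℬ_i} J_i = 𝟙/d^{|𝒜_i|} (identity on the input factors, normalized). Assume the family is compatible: for all i, j, the partial traces of J_i and J_j over (ℬ_i \ ℬ_j) ∪ (𝒜_i \ 𝒜_j) and (ℬ_j \ ℬ_i) ∪ (𝒜_j \ 𝒜_i) respectively, onto the common factors indexed by (ℬ_i ∩ ℬ_j) ∪ (𝒜_i ∩ 𝒜_j), coincide. Then there exists a Hermitian trace-one operator J on H_{I_B,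 I_A} such that Tr_{I_B} J = 𝟙/d^{|I_A|} and, for every i, the partial trace of J over the complements of ℬ_i and 𝒜_i equals J_i. -/
/-!
For `s = (sB, sA)` let `E_s M = Tr_{sᶜ} M ⊗ 𝟙_{sᶜ} / dim(sᶜ)` (`condExp s M`) be the conditional
expectation onto operators supported on the factors in `s`. These are commuting projections with
`E_s E_t = E_{s ⊓ t}`, and for such a family every compatible system `X_i = E_{s_i} X_i` glues:
if `E_{s_i} G = X_i` for the indices treated so far, then `G + X_a - E_{s_a} G` also has marginal
`X_a` on `s_a`, and compatibility makes the correction invisible to the earlier `E_{s_i}`.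
Apply this to the embedded `J i` together with the maximally mixed operator on `(∅, I_A)`: it is
compatible with each `J i` precisely because `J i` is trace preserving, and as a marginal of the
glued operator it says that this operator is trace preserving and of trace one. Since every `E_s`
commutes with the adjoint, the gluing can be done inside the Hermitian operators.
-/

open Matrix

section

variable {ι : Type*} [DecidableEq ι] {d : ℕ}

/-- Merge a function on a subset `t` with a function on `s \ t` into a
function on `s`. -/
def mergeFn (s t : Finset ι)
    (f : {x // x ∈ t} → Fin d) (h : {x // x ∈ s \ t} → Fin d)
    (x : {x // x ∈ s}) : Fin d :=
  if hx : (x : ι) ∈ t then f ⟨x, hx⟩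
  else h ⟨x, Finset.mem_sdiff.mpr ⟨x.2, hx⟩⟩

end

variable {ιB ιA : Type*} [Fintype ιB] [DecidableEq ιB] [Fintype ιA] [DecidableEq ιA]

/-- Partial trace of an operator on
`(⊗_{b ∈ sB} ℂ^d) ⊗ (⊗_{a ∈ sA} ℂ^d)` down to the factors indexed by
`tB` and `tA`, tracing out `sB \ tB` and `sA \ tA`. -/
noncomputable def ptr2 {d : ℕ} (sB tB : Finset ιB) (sA tA : Finset ιA)
    (M : Matrix (({x // x ∈ sB} → Fin d) × ({x // x ∈ sA} → Fin d))
        (({x // x ∈ sB} → Fin d) × ({x // x ∈ sA} → Fin d)) ℂ) :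
    Matrix (({x // x ∈ tB} → Fin d) × ({x // x ∈ tA} → Fin d))
        (({x // x ∈ tB} → Fin d) × ({x // x ∈ tA} → Fin d)) ℂ :=
  fun p q => ∑ hB : {x // x ∈ sB \ tB} → Fin d,
    ∑ hA : {x // x ∈ sA \ tA} → Fin d,
      M (mergeFn sB tB p.1 hB, mergeFn sA tA p.2 hA)
        (mergeFn sB tB q.1 hB, mergeFn sA tA q.2 hA)

/-- Trace over all output factors (indexed by `sB`), leaving an operator on
the input factors (indexed by `sA`). -/
noncomputable def trOut {d : ℕ} (sB : Finset ιB) (sA : Finset ιA)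
    (M : Matrix (({x // x ∈ sB} → Fin d) × ({x // x ∈ sA} → Fin d))
        (({x // x ∈ sB} → Fin d) × ({x // x ∈ sA} → Fin d)) ℂ) :
    Matrix ({x // x ∈ sA} → Fin d) ({x // x ∈ sA} → Fin d) ℂ :=
  fun f g => ∑ h : {x // x ∈ sB} → Fin d, M (h, f) (h, g)

open Finset

namespace HPTPMarginal

theorem exists_mem_forall_map_eq_of_compatible {V σ ι : Type*} [AddCommGroup V]
    [SemilatticeInf σ] [DecidableEq ι] (E : σ → V →+ V)
    (hE : ∀ s t v, E s (E t v) = E (s ⊓ t) v) (W : AddSubgroup V)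
    (hEW : ∀ s v, v ∈ W → E s v ∈ W) (s : ι → σ) (X : ι → V) (hXW : ∀ i, X i ∈ W)
    (hX : ∀ i, E (s i) (X i) = X i)
    (hcompat : ∀ i j, E (s i ⊓ s j) (X i) = E (s i ⊓ s j) (X j)) (T : Finset ι) :
    ∃ G ∈ W, ∀ i ∈ T, E (s i) G = X i := by
  induction T using Finset.induction_on with
  | empty => exact ⟨0, W.zero_mem, by simp⟩
  | insert a T _ ih =>
    obtain ⟨G, hGW, hG⟩ := ih
    refine ⟨G + X a - E (s a) G, W.sub_mem (W.add_mem hGW (hXW a)) (hEW _ _ hGW), ?_⟩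
    simp only [Finset.mem_insert, forall_eq_or_imp, map_sub, map_add, hE, inf_idem, hX]
    refine ⟨by abel, fun i hi => ?_⟩
    have hcorr : E (s i ⊓ s a) G = E (s i ⊓ s a) (X a) := by
      calc E (s i ⊓ s a) G = E (s a) (E (s i) G) := by rw [hE, inf_comm]
        _ = E (s a) (E (s i) (X i)) := by rw [hG i hi, hX]
        _ = E (s i ⊓ s a) (X a) := by rw [hE, inf_comm, hcompat]
    rw [hG i hi, hcorr, ← hE, hX]
    abel

abbrev Cfg {ι : Type*} (d : ℕ) (s : Finset ι) : Type _ := {x // x ∈ s} → Fin d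

namespace Cfg

variable {ι : Type*} [Fintype ι] {d : ℕ}

def restrict (t : Finset ι) (p : Cfg d (univ : Finset ι)) : Cfg d t :=
  fun x => p ⟨x, mem_univ _⟩

def AgreeOff (s : Finset ι) (p q : Cfg d (univ : Finset ι)) : Prop :=
  ∀ x : {x // x ∈ (univ : Finset ι)}, (x : ι) ∉ s → p x = q x

lemma AgreeOff.refl (s : Finset ι) (p : Cfg d (univ : Finset ι)) : AgreeOff s p p :=
  fun _ _ => rfl

lemma AgreeOff.symm {s : Finset ι} {p q : Cfg d (univ : Finset ι)} (h : AgreeOff s p q) :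
    AgreeOff s q p :=
  fun x hx => (h x hx).symm

lemma AgreeOff.mono {s s' : Finset ι} (hs : s ⊆ s') {p q : Cfg d (univ : Finset ι)}
    (h : AgreeOff s p q) : AgreeOff s' p q :=
  fun x hx => h x (fun hxs => hx (hs hxs))

lemma AgreeOff.eq_of_restrict_eq {s : Finset ι} {p q : Cfg d (univ : Finset ι)}
    (h : AgreeOff s p q) (hs : restrict s p = restrict s q) : p = q := by
  funext x
  by_cases hx : (x : ι) ∈ s
  · exact congrFun hs ⟨x, hx⟩
  · exact h x hx

variable [DecidableEq ι]

instance (s : Finset ι) (p q : Cfg d (univ : Finset ι)) : Decidable (AgreeOff s p q) := by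
  unfold AgreeOff; infer_instance

def override (s : Finset ι) (p r : Cfg d (univ : Finset ι)) : Cfg d (univ : Finset ι) :=
  fun x => if (x : ι) ∈ s then p x else r x

lemma override_override (s t : Finset ι) (p r r' : Cfg d (univ : Finset ι)) :
    override t (override s p r) r' = override (s ∩ t) p (override t r r') := by
  funext x
  by_cases hxt : (x : ι) ∈ t <;> by_cases hxs : (x : ι) ∈ s <;> simp [override, hxt, hxs]

lemma override_override_self (t : Finset ι) (p r : Cfg d (univ : Finset ι)) :
    override t (override t p r) (override t r p) = p := by
  funext x
  by_cases hxt : (x : ι) ∈ t <;> simp [override, hxt]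

lemma restrict_override (s t : Finset ι) (p r : Cfg d (univ : Finset ι)) :
    restrict s (override t p r) = mergeFn s t (restrict t p) (restrict (s \ t) r) := by
  funext x
  by_cases hx : (x : ι) ∈ t <;> simp [restrict, override, mergeFn, hx]

lemma restrict_override_self (s : Finset ι) (p r : Cfg d (univ : Finset ι)) :
    restrict s (override s p r) = restrict s p := by
  funext x; simp [restrict, override]

lemma restrict_mergeFn (t : Finset ι) (a : Cfg d t) (h : Cfg d (univ \ t)) :
    restrict t (mergeFn univ t a h) = a := by
  funext x
  simp only [restrict, mergeFn, dif_pos x.2]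

lemma restrict_sdiff_mergeFn (t : Finset ι) (a : Cfg d t) (h : Cfg d (univ \ t)) :
    restrict (univ \ t) (mergeFn univ t a h) = h := by
  funext x
  simp only [restrict, mergeFn, dif_neg (mem_sdiff.mp x.2).2]

lemma mergeFn_restrict (t : Finset ι) (p : Cfg d (univ : Finset ι)) :
    mergeFn univ t (restrict t p) (restrict (univ \ t) p) = p := by
  funext x
  by_cases hx : (x : ι) ∈ t <;> simp [mergeFn, restrict, hx]

def restrictEquiv (t : Finset ι) : Cfg d (univ : Finset ι) ≃ Cfg d t × Cfg d (univ \ t) where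
  toFun p := (restrict t p, restrict (univ \ t) p)
  invFun z := mergeFn univ t z.1 z.2
  left_inv := mergeFn_restrict t
  right_inv z := Prod.ext (restrict_mergeFn t z.1 z.2) (restrict_sdiff_mergeFn t z.1 z.2)

lemma sum_restrict {β : Type*} [AddCommMonoid β] (t : Finset ι) (g : Cfg d t → β) :
    ∑ p : Cfg d (univ : Finset ι), g (restrict t p) = d ^ (univ \ t).card • ∑ a, g a := by
  rw [← (restrictEquiv t).symm.sum_comp, Fintype.sum_prod_type]
  simp [restrictEquiv, restrict_mergeFn, smul_sum]

lemma agreeOff_override_of_subset {s t : Finset ι} (h : t ⊆ s) (p q r : Cfg d (univ : Finset ι)) :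
    AgreeOff s (override t p r) (override t q r) :=
  fun x hx => by simp [override, show (x : ι) ∉ t from fun hxt => hx (h hxt)]

lemma agreeOff_override_iff {s t : Finset ι} {p q : Cfg d (univ : Finset ι)} (h : AgreeOff s p q)
    (r : Cfg d (univ : Finset ι)) :
    AgreeOff t (override s p r) (override s q r) ↔ AgreeOff (s ∩ t) p q := by
  refine ⟨fun hst x hx => ?_, fun hst x hx => ?_⟩
  · by_cases hxs : (x : ι) ∈ s
    · simpa [override, hxs] using hst x (fun hxt => hx (mem_inter.mpr ⟨hxs, hxt⟩))
    · exact h x hxs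
  · by_cases hxs : (x : ι) ∈ s
    · simpa [override, hxs] using hst x (fun hm => hx (mem_inter.mp hm).2)
    · simp [override, hxs]

lemma agreeOff_mergeFn (t : Finset ι) (a b : Cfg d t) (h : Cfg d (univ \ t)) :
    AgreeOff t (mergeFn univ t a h) (mergeFn univ t b h) :=
  fun x hx => by simp [mergeFn, hx]

omit [Fintype ι] in
lemma mergeFn_self (s : Finset ι) (a : Cfg d s) (h : Cfg d (s \ s)) : mergeFn s s a h = a := by
  funext x
  simp [mergeFn]

omit [Fintype ι] in
lemma mergeFn_empty (s : Finset ι) (a : Cfg d (∅ : Finset ι)) (h : Cfg d (s \ ∅)) :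
    mergeFn s ∅ a h = fun x : {x // x ∈ s} => h ⟨x.1, by simp⟩ := by
  funext x
  simp [mergeFn]

end Cfg

open Cfg

abbrev Idx (ιB ιA : Type*) [Fintype ιB] [Fintype ιA] (d : ℕ) : Type _ :=
  Cfg d (univ : Finset ιB) × Cfg d (univ : Finset ιA)

abbrev Op (ιB ιA : Type*) [Fintype ιB] [Fintype ιA] (d : ℕ) : Type _ :=
  Matrix (Idx ιB ιA d) (Idx ιB ιA d) ℂ

abbrev LocOp (d : ℕ) (s : Finset ιB × Finset ιA) : Type _ :=
  Matrix (Cfg d s.1 × Cfg d s.2) (Cfg d s.1 × Cfg d s.2) ℂ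

variable {d : ℕ}

namespace Idx

def override (s : Finset ιB × Finset ιA) (P R : Idx ιB ιA d) : Idx ιB ιA d :=
  (Cfg.override s.1 P.1 R.1, Cfg.override s.2 P.2 R.2)

def restrict (s : Finset ιB × Finset ιA) (P : Idx ιB ιA d) : Cfg d s.1 × Cfg d s.2 :=
  (Cfg.restrict s.1 P.1, Cfg.restrict s.2 P.2)

def AgreeOff (s : Finset ιB × Finset ιA) (P Q : Idx ιB ιA d) : Prop :=
  Cfg.AgreeOff s.1 P.1 Q.1 ∧ Cfg.AgreeOff s.2 P.2 Q.2

instance (s : Finset ιB × Finset ιA) (P Q : Idx ιB ιA d) : Decidable (AgreeOff s P Q) := by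
  unfold AgreeOff; infer_instance

lemma override_override (s t : Finset ιB × Finset ιA) (P R R' : Idx ιB ιA d) :
    override t (override s P R) R' = override (s ⊓ t) P (override t R R') :=
  Prod.ext (Cfg.override_override _ _ _ _ _) (Cfg.override_override _ _ _ _ _)

lemma sum_sum_override {β : Type*} [AddCommMonoid β] (t : Finset ιB × Finset ιA)
    (f : Idx ιB ιA d → β) :
    ∑ R, ∑ R', f (override t R R') = Fintype.card (Idx ιB ιA d) • ∑ R, f R := by
  let σ : Equiv.Perm (Idx ιB ιA d × Idx ιB ιA d) :=
    Function.Involutive.toPerm (fun z => (override t z.1 z.2, override t z.2 z.1)) fun _ =>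
      Prod.ext (Prod.ext (override_override_self _ _ _) (override_override_self _ _ _))
        (Prod.ext (override_override_self _ _ _) (override_override_self _ _ _))
  calc ∑ R, ∑ R', f (override t R R') = ∑ z, f (σ z).1 := (Fintype.sum_prod_type' _).symm
    _ = ∑ z : Idx ιB ιA d × Idx ιB ιA d, f z.1 := Equiv.sum_comp σ (fun z => f z.1)
    _ = Fintype.card (Idx ιB ιA d) • ∑ R, f R := by
      rw [Fintype.sum_prod_type, ← Finset.card_univ, ← Finset.sum_const, Finset.sum_comm]

omit [DecidableEq ιB] [DecidableEq ιA] in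
lemma AgreeOff.refl (s : Finset ιB × Finset ιA) (P : Idx ιB ιA d) : AgreeOff s P P :=
  ⟨.refl _ _, .refl _ _⟩

omit [DecidableEq ιB] [DecidableEq ιA] in
lemma AgreeOff.symm {s : Finset ιB × Finset ιA} {P Q : Idx ιB ιA d} (h : AgreeOff s P Q) :
    AgreeOff s Q P :=
  ⟨h.1.symm, h.2.symm⟩

omit [DecidableEq ιB] [DecidableEq ιA] in
lemma AgreeOff.mono {s s' : Finset ιB × Finset ιA} (hs : s ≤ s') {P Q : Idx ιB ιA d}
    (h : AgreeOff s P Q) : AgreeOff s' P Q :=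
  ⟨h.1.mono hs.1, h.2.mono hs.2⟩

lemma agreeOff_override_of_le {s t : Finset ιB × Finset ιA} (h : t ≤ s) (P Q R : Idx ιB ιA d) :
    AgreeOff s (override t P R) (override t Q R) :=
  ⟨agreeOff_override_of_subset h.1 _ _ _, agreeOff_override_of_subset h.2 _ _ _⟩

lemma agreeOff_override_iff {s t : Finset ιB × Finset ιA} {P Q : Idx ιB ιA d}
    (h : AgreeOff s P Q) (R : Idx ιB ιA d) :
    AgreeOff t (override s P R) (override s Q R) ↔ AgreeOff (s ⊓ t) P Q :=
  and_congr (Cfg.agreeOff_override_iff h.1 R.1) (Cfg.agreeOff_override_iff h.2 R.2)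

omit [DecidableEq ιB] [DecidableEq ιA] in
lemma AgreeOff.eq_of_restrict_eq {s : Finset ιB × Finset ιA} {P Q : Idx ιB ιA d}
    (h : AgreeOff s P Q) (hs : restrict s P = restrict s Q) : P = Q :=
  Prod.ext (h.1.eq_of_restrict_eq (congrArg Prod.fst hs))
    (h.2.eq_of_restrict_eq (congrArg Prod.snd hs))

lemma restrict_override_self (s : Finset ιB × Finset ιA) (P R : Idx ιB ιA d) :
    restrict s (override s P R) = restrict s P :=
  Prod.ext (Cfg.restrict_override_self _ _ _) (Cfg.restrict_override_self _ _ _)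

lemma restrict_override (s t : Finset ιB × Finset ιA) (P R : Idx ιB ιA d) :
    restrict s (override t P R) =
      (mergeFn s.1 t.1 (Cfg.restrict t.1 P.1) (Cfg.restrict (s.1 \ t.1) R.1),
        mergeFn s.2 t.2 (Cfg.restrict t.2 P.2) (Cfg.restrict (s.2 \ t.2) R.2)) :=
  Prod.ext (Cfg.restrict_override _ _ _ _) (Cfg.restrict_override _ _ _ _)

lemma sum_restrict (u : Finset ιB) (v : Finset ιA) (g : Cfg d u → Cfg d v → ℂ) :
    ∑ R : Idx ιB ιA d, g (Cfg.restrict u R.1) (Cfg.restrict v R.2) =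
      (d : ℂ) ^ (univ \ u).card * (d : ℂ) ^ (univ \ v).card * ∑ a, ∑ b, g a b := by
  rw [Fintype.sum_prod_type, sum_congr rfl fun p _ => Cfg.sum_restrict v (g (Cfg.restrict u p)),
    ← smul_sum, Cfg.sum_restrict u (fun a => ∑ b, g a b), smul_smul, nsmul_eq_mul]
  push_cast
  ring

end Idx

-- Summing over all of `Idx` rather than over the configurations off `s` makes the normalisation
-- independent of `s`.
noncomputable def condExp (s : Finset ιB × Finset ιA) : Op ιB ιA d →+ Op ιB ιA d where
  toFun M := Matrix.of fun P Q => if Idx.AgreeOff s P Q then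
      (Fintype.card (Idx ιB ιA d) : ℂ)⁻¹ * ∑ R, M (Idx.override s P R) (Idx.override s Q R)
    else 0
  map_zero' := by ext; simp
  map_add' M N := by
    ext P Q
    by_cases h : Idx.AgreeOff s P Q <;> simp [h, sum_add_distrib, mul_add]

lemma condExp_apply (s : Finset ιB × Finset ιA) (M : Op ιB ιA d) (P Q : Idx ιB ιA d) :
    condExp s M P Q = if Idx.AgreeOff s P Q then
      (Fintype.card (Idx ιB ιA d) : ℂ)⁻¹ * ∑ R, M (Idx.override s P R) (Idx.override s Q R)
    else 0 := rfl

lemma card_idx_ne_zero [NeZero d] : (Fintype.card (Idx ιB ιA d) : ℂ) ≠ 0 :=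
  Nat.cast_ne_zero.mpr Fintype.card_ne_zero

lemma condExp_condExp [NeZero d] (s t : Finset ιB × Finset ιA) (M : Op ιB ιA d) :
    condExp s (condExp t M) = condExp (s ⊓ t) M := by
  ext P Q
  by_cases hs : Idx.AgreeOff s P Q
  · simp only [condExp_apply, if_pos hs, Idx.agreeOff_override_iff hs, Idx.override_override]
    split_ifs
    · rw [← mul_sum, Idx.sum_sum_override t
          (fun R => M (Idx.override (s ⊓ t) P R) (Idx.override (s ⊓ t) Q R)),
        nsmul_eq_mul, inv_mul_cancel_left₀ card_idx_ne_zero]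
    · simp
  · rw [condExp_apply, condExp_apply, if_neg hs, if_neg (mt (.mono inf_le_left) hs)]

lemma trace_condExp [NeZero d] (s : Finset ιB × Finset ιA) (M : Op ιB ιA d) :
    (condExp s M).trace = M.trace := by
  simp only [Matrix.trace, Matrix.diag, condExp_apply, if_pos (Idx.AgreeOff.refl _ _)]
  rw [← mul_sum, Idx.sum_sum_override s (fun R => M R R), nsmul_eq_mul,
    inv_mul_cancel_left₀ card_idx_ne_zero]

lemma conjTranspose_condExp (s : Finset ιB × Finset ιA) (M : Op ιB ιA d) :
    (condExp s M)ᴴ = condExp s Mᴴ := by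
  ext P Q
  simp only [Matrix.conjTranspose_apply, condExp_apply]
  by_cases h : Idx.AgreeOff s P Q
  · simp [h, h.symm, star_sum]
  · simp [h, mt Idx.AgreeOff.symm h]

lemma condExp_smul_one [NeZero d] (s : Finset ιB × Finset ιA) (c : ℂ) :
    condExp s (c • (1 : Op ιB ιA d)) = c • 1 := by
  ext P Q
  rw [condExp_apply]
  split_ifs with h
  · by_cases hPQ : P = Q
    · subst hPQ
      simp only [Matrix.smul_apply, Matrix.one_apply_eq, smul_eq_mul, mul_one, sum_const,
        card_univ, nsmul_eq_mul]
      rw [inv_mul_cancel_left₀ card_idx_ne_zero]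
    have hne : ∀ R, Idx.override s P R ≠ Idx.override s Q R := fun R hR =>
      hPQ (h.eq_of_restrict_eq (by
        rw [← Idx.restrict_override_self s P R, hR, Idx.restrict_override_self]))
    simp [hne, hPQ]
  · simp [show P ≠ Q from fun hPQ => h (hPQ ▸ .refl _ _)]

lemma card_idx :
    (Fintype.card (Idx ιB ιA d) : ℂ) = (d : ℂ) ^ (Fintype.card ιB + Fintype.card ιA) := by
  simp [pow_add]

noncomputable def dimOff (d : ℕ) (s : Finset ιB × Finset ιA) : ℂ :=
  (d : ℂ) ^ ((univ \ s.1).card + (univ \ s.2).card)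

lemma inv_card_mul_inv_dimOff_mul [NeZero d] {s t : Finset ιB × Finset ιA} (h : t ≤ s) :
    (Fintype.card (Idx ιB ιA d) : ℂ)⁻¹ * ((dimOff d s)⁻¹ *
      ((d : ℂ) ^ (univ \ (s.1 \ t.1)).card * (d : ℂ) ^ (univ \ (s.2 \ t.2)).card)) =
      (dimOff d t)⁻¹ := by
  have hd : (d : ℂ) ≠ 0 := Nat.cast_ne_zero.mpr (NeZero.ne d)
  have := card_sdiff_add_card_eq_card h.1
  have := card_sdiff_add_card_eq_card h.2
  have := card_sdiff_add_card_eq_card (subset_univ s.1)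
  have := card_sdiff_add_card_eq_card (subset_univ s.2)
  have := card_sdiff_add_card_eq_card (subset_univ t.1)
  have := card_sdiff_add_card_eq_card (subset_univ t.2)
  have := card_sdiff_add_card_eq_card (subset_univ (s.1 \ t.1))
  have := card_sdiff_add_card_eq_card (subset_univ (s.2 \ t.2))
  rw [card_idx, dimOff, dimOff]
  field_simp
  simp only [← pow_add, card_univ] at *
  congr 1
  omega

-- `embed s X = X ⊗ 𝟙_{sᶜ} / dim(sᶜ)`
noncomputable def embed (s : Finset ιB × Finset ιA) (X : LocOp d s) : Op ιB ιA d :=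
  Matrix.of fun P Q => if Idx.AgreeOff s P Q then
    (dimOff d s)⁻¹ * X (Idx.restrict s P) (Idx.restrict s Q) else 0

lemma embed_apply (s : Finset ιB × Finset ιA) (X : LocOp d s) (P Q : Idx ιB ιA d) :
    embed s X P Q = if Idx.AgreeOff s P Q then
      (dimOff d s)⁻¹ * X (Idx.restrict s P) (Idx.restrict s Q) else 0 := rfl

lemma condExp_embed [NeZero d] {s t : Finset ιB × Finset ιA} (h : t ≤ s) (X : LocOp d s) :
    condExp t (embed s X) = embed t (ptr2 s.1 t.1 s.2 t.2 X) := by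
  ext P Q
  rw [condExp_apply, embed_apply]
  split_ifs with ht
  · simp only [embed_apply, if_pos (Idx.agreeOff_override_of_le h _ _ _), Idx.restrict_override]
    rw [← mul_sum, Idx.sum_restrict (s.1 \ t.1) (s.2 \ t.2) (fun a b =>
      X (mergeFn s.1 t.1 (Cfg.restrict t.1 P.1) a, mergeFn s.2 t.2 (Cfg.restrict t.2 P.2) b)
        (mergeFn s.1 t.1 (Cfg.restrict t.1 Q.1) a, mergeFn s.2 t.2 (Cfg.restrict t.2 Q.2) b))]
    rw [← inv_card_mul_inv_dimOff_mul h]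
    simp only [mul_assoc]
    rfl
  · rfl

lemma dimOff_ne_zero [NeZero d] (s : Finset ιB × Finset ιA) : dimOff d s ≠ 0 :=
  pow_ne_zero _ (Nat.cast_ne_zero.mpr (NeZero.ne d))

lemma embed_univ (M : Op ιB ιA d) : embed (univ, univ) M = M := by
  ext P Q
  simp [embed_apply, dimOff, Idx.AgreeOff, Cfg.AgreeOff, Idx.restrict]
  rfl

lemma embed_injective [NeZero d] (s : Finset ιB × Finset ιA) :
    Function.Injective (embed (d := d) s) := by
  intro X Y hXY
  ext p q
  let extend : Cfg d s.1 × Cfg d s.2 → Idx ιB ιA d := fun p =>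
    (mergeFn univ s.1 p.1 default, mergeFn univ s.2 p.2 default)
  have hres : ∀ p, Idx.restrict s (extend p) = p := fun p =>
    Prod.ext (restrict_mergeFn _ _ _) (restrict_mergeFn _ _ _)
  have hagree : Idx.AgreeOff s (extend p) (extend q) :=
    ⟨agreeOff_mergeFn _ _ _ _, agreeOff_mergeFn _ _ _ _⟩
  have := congrFun (congrFun hXY (extend p)) (extend q)
  rw [embed_apply, embed_apply, if_pos hagree, if_pos hagree, hres, hres] at this
  exact mul_left_cancel₀ (inv_ne_zero (dimOff_ne_zero s)) this

lemma condExp_eq_embed_ptr2 [NeZero d] (t : Finset ιB × Finset ιA) (M : Op ιB ιA d) :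
    condExp t M = embed t (ptr2 univ t.1 univ t.2 M) := by
  simpa only [embed_univ] using
    condExp_embed (s := (univ, univ)) ⟨subset_univ t.1, subset_univ t.2⟩ M

lemma ptr2_univ_eq_of_condExp_eq_embed [NeZero d] {t : Finset ιB × Finset ιA} {M : Op ιB ιA d}
    {Y : LocOp d t} (h : condExp t M = embed t Y) : ptr2 univ t.1 univ t.2 M = Y :=
  embed_injective t (by rw [← condExp_eq_embed_ptr2, h])

omit [Fintype ιB] [Fintype ιA] in
lemma ptr2_self (sB : Finset ιB) (sA : Finset ιA) (X : LocOp d (sB, sA)) :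
    ptr2 sB sB sA sA X = X := by
  have : IsEmpty {x // x ∈ sB \ sB} := ⟨fun x => by simpa using x.2⟩
  have : IsEmpty {x // x ∈ sA \ sA} := ⟨fun x => by simpa using x.2⟩
  ext p q
  simp [ptr2, mergeFn_self]

omit [Fintype ιB] [Fintype ιA] in
lemma ptr2_empty_apply (sB : Finset ιB) (sA : Finset ιA) (X : LocOp d (sB, sA))
    (p q : Cfg d (∅ : Finset ιB) × Cfg d sA) :
    ptr2 sB ∅ sA sA X p q = trOut sB sA X p.2 q.2 := by
  have : IsEmpty {x // x ∈ sA \ sA} := ⟨fun x => by simpa using x.2⟩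
  let e : Cfg d (sB \ ∅) ≃ Cfg d sB :=
    Equiv.arrowCongr (Equiv.subtypeEquivRight (by simp)) (.refl _)
  refine Fintype.sum_equiv e _ _ fun h => ?_
  simp only [mergeFn_self, Fintype.sum_unique, mergeFn_empty]
  rfl

omit [Fintype ιB] [Fintype ιA] in
lemma ptr2_empty_eq_smul_one_iff (sB : Finset ιB) (sA : Finset ιA) (X : LocOp d (sB, sA))
    (c : ℂ) : ptr2 sB ∅ sA sA X = c • 1 ↔ trOut sB sA X = c • 1 := by
  constructor
  · intro h
    ext f g
    simpa [ptr2_empty_apply, Matrix.one_apply] using congrFun (congrFun h (default, f)) (default, g)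
  · intro h
    ext p q
    rw [ptr2_empty_apply, h]
    simp [Matrix.one_apply, Prod.ext_iff, Subsingleton.elim p.1 q.1]

lemma condExp_embed_self [NeZero d] (s : Finset ιB × Finset ιA) (X : LocOp d s) :
    condExp s (embed s X) = embed s X := by
  rw [condExp_embed le_rfl]
  exact congrArg _ (ptr2_self s.1 s.2 X)

lemma conjTranspose_embed (s : Finset ιB × Finset ιA) (X : LocOp d s) :
    (embed s X)ᴴ = embed s Xᴴ := by
  ext P Q
  simp only [Matrix.conjTranspose_apply, embed_apply]
  by_cases h : Idx.AgreeOff s P Q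
  · simp [h, h.symm, dimOff]
  · simp [h, mt Idx.AgreeOff.symm h]

lemma embed_smul_one (s : Finset ιB × Finset ιA) (c : ℂ) :
    embed s (c • (1 : LocOp d s)) = ((dimOff d s)⁻¹ * c) • (1 : Op ιB ιA d) := by
  ext P Q
  rw [embed_apply]
  split_ifs with h
  · by_cases hPQ : P = Q
    · simp [hPQ]
    · simp [hPQ, mt h.eq_of_restrict_eq hPQ]
  · simp [show P ≠ Q from fun hPQ => h (hPQ ▸ .refl _ _)]

noncomputable def maxMixed : Op ιB ιA d := (Fintype.card (Idx ιB ιA d) : ℂ)⁻¹ • 1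

lemma condExp_maxMixed [NeZero d] (s : Finset ιB × Finset ιA) :
    condExp s (maxMixed : Op ιB ιA d) = maxMixed :=
  condExp_smul_one s _

lemma trace_maxMixed [NeZero d] : (maxMixed : Op ιB ιA d).trace = 1 := by
  rw [maxMixed, Matrix.trace_smul, Matrix.trace_one, smul_eq_mul, inv_mul_cancel₀ card_idx_ne_zero]

lemma maxMixed_mem_selfAdjoint : (maxMixed : Op ιB ιA d) ∈ selfAdjoint (Op ιB ιA d) := by
  simp [maxMixed, selfAdjoint.mem_iff, star_smul]

lemma embed_empty_smul_one_eq_maxMixed [NeZero d] (sA : Finset ιA) :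
    embed (∅, sA) ((1 / (d : ℂ) ^ sA.card) • (1 : LocOp d (∅, sA))) = (maxMixed : Op ιB ιA d) := by
  have := card_sdiff_add_card_eq_card (subset_univ sA)
  rw [embed_smul_one, maxMixed, card_idx, dimOff]
  field_simp
  simp only [sdiff_empty, card_univ, ← pow_add] at *
  rw [add_assoc, this]

lemma condExp_mem_selfAdjoint (s : Finset ιB × Finset ιA) {M : Op ιB ιA d}
    (hM : M ∈ selfAdjoint (Op ιB ιA d)) : condExp s M ∈ selfAdjoint (Op ιB ιA d) := by
  rw [selfAdjoint.mem_iff, Matrix.star_eq_conjTranspose] at hM ⊢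
  rw [conjTranspose_condExp, hM]

lemma condExp_embed_eq_maxMixed_of_trOut [NeZero d] {sB : Finset ιB} {sA : Finset ιA}
    {X : LocOp d (sB, sA)} (h : trOut sB sA X = (1 / (d : ℂ) ^ sA.card) • 1) :
    condExp (∅, sA) (embed (sB, sA) X) = maxMixed := by
  rw [condExp_embed (s := (sB, sA)) (t := (∅, sA)) ⟨empty_subset sB, le_rfl⟩,
    ← embed_empty_smul_one_eq_maxMixed]
  exact congrArg _ ((ptr2_empty_eq_smul_one_iff _ _ _ _).mpr h)

lemma trOut_univ_of_condExp_eq_maxMixed [NeZero d] {M : Op ιB ιA d}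
    (h : condExp (∅, univ) M = maxMixed) :
    trOut univ univ M = (1 / (d : ℂ) ^ (univ : Finset ιA).card) • 1 := by
  rw [← embed_empty_smul_one_eq_maxMixed] at h
  exact (ptr2_empty_eq_smul_one_iff _ _ _ _).mp (ptr2_univ_eq_of_condExp_eq_embed h)

lemma embed_mem_selfAdjoint {s : Finset ιB × Finset ιA} {X : LocOp d s} (hX : X.IsHermitian) :
    embed s X ∈ selfAdjoint (Op ιB ιA d) := by
  rw [selfAdjoint.mem_iff, Matrix.star_eq_conjTranspose, conjTranspose_embed, hX]

lemma exists_mem_selfAdjoint_condExp_eq [NeZero d] {k : ℕ} (ℬ : Fin k → Finset ιB)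
    (𝒜 : Fin k → Finset ιA) (J : ∀ i, LocOp d (ℬ i, 𝒜 i)) (hHerm : ∀ i, (J i).IsHermitian)
    (hTP : ∀ i, trOut (ℬ i) (𝒜 i) (J i) = (1 / (d : ℂ) ^ (𝒜 i).card) • 1)
    (hcompat : ∀ i j, ptr2 (ℬ i) (ℬ i ∩ ℬ j) (𝒜 i) (𝒜 i ∩ 𝒜 j) (J i) =
      ptr2 (ℬ j) (ℬ i ∩ ℬ j) (𝒜 j) (𝒜 i ∩ 𝒜 j) (J j)) :
    ∃ G ∈ selfAdjoint (Op ιB ιA d), condExp (∅, univ) G = maxMixed ∧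
      ∀ i, condExp (ℬ i, 𝒜 i) G = embed (ℬ i, 𝒜 i) (J i) := by
  let s : Option (Fin k) → Finset ιB × Finset ιA := fun o => o.elim (∅, univ) fun i => (ℬ i, 𝒜 i)
  let X : Option (Fin k) → Op ιB ιA d := fun o => o.elim maxMixed fun i => embed (ℬ i, 𝒜 i) (J i)
  have hXW : ∀ o, X o ∈ selfAdjoint (Op ιB ιA d)
    | none => maxMixed_mem_selfAdjoint
    | some i => embed_mem_selfAdjoint (hHerm i)
  have hX : ∀ o, condExp (s o) (X o) = X o
    | none => condExp_maxMixed _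
    | some i => condExp_embed_self _ _
  have hmixed : ∀ i, condExp (s none ⊓ s (some i)) (X none) =
      condExp (s none ⊓ s (some i)) (X (some i)) := by
    intro i
    simp only [s, X, Option.elim, Prod.mk_inf_mk, inf_eq_inter, empty_inter, univ_inter]
    rw [condExp_maxMixed, condExp_embed_eq_maxMixed_of_trOut (hTP i)]
  have hcompat_all : ∀ o o', condExp (s o ⊓ s o') (X o) = condExp (s o ⊓ s o') (X o')
    | none, none => rfl
    | none, some j => hmixed j
    | some i, none => by rw [inf_comm]; exact (hmixed i).symm
    | some i, some j => by
      simp only [s, X, Option.elim]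
      rw [condExp_embed inf_le_left, condExp_embed inf_le_right]
      exact congrArg _ (hcompat i j)
  obtain ⟨G, hG, hGs⟩ := exists_mem_forall_map_eq_of_compatible (V := Op ιB ιA d)
    condExp condExp_condExp (selfAdjoint _) (fun s _ hM => condExp_mem_selfAdjoint s hM) s X hXW hX
    hcompat_all univ
  exact ⟨G, hG, hGs none (mem_univ _), fun i => hGs (some i) (mem_univ _)⟩

end HPTPMarginal

open HPTPMarginal

theorem hptp_marginal_problem_general
    (d : ℕ) (hd : 1 ≤ d) (k : ℕ)
    (𝒜 : Fin k → Finset ιA) (ℬ : Fin k → Finset ιB)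
    (J : ∀ i : Fin k,
      Matrix (({x // x ∈ ℬ i} → Fin d) × ({x // x ∈ 𝒜 i} → Fin d))
        (({x // x ∈ ℬ i} → Fin d) × ({x // x ∈ 𝒜 i} → Fin d)) ℂ)
    (hHerm : ∀ i, (J i).IsHermitian)
    (hTP : ∀ i, trOut (ℬ i) (𝒜 i) (J i) = (1 / (d : ℂ) ^ ((𝒜 i).card)) • 1)
    (hcompat : ∀ i j : Fin k,
      ptr2 (ℬ i) (ℬ i ∩ ℬ j) (𝒜 i) (𝒜 i ∩ 𝒜 j) (J i) =
        ptr2 (ℬ j) (ℬ i ∩ ℬ j) (𝒜 j) (𝒜 i ∩ 𝒜 j) (J j)) :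
    ∃ Jglob : Matrix
        (({x // x ∈ (Finset.univ : Finset ιB)} → Fin d) ×
          ({x // x ∈ (Finset.univ : Finset ιA)} → Fin d))
        (({x // x ∈ (Finset.univ : Finset ιB)} → Fin d) ×
          ({x // x ∈ (Finset.univ : Finset ιA)} → Fin d)) ℂ,
      Jglob.IsHermitian ∧ Jglob.trace = 1 ∧
      trOut Finset.univ Finset.univ Jglob =
        (1 / (d : ℂ) ^ ((Finset.univ : Finset ιA).card)) • 1 ∧
      ∀ i : Fin k, ptr2 Finset.univ (ℬ i) Finset.univ (𝒜 i) Jglob = J i := by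
  have : NeZero d := ⟨by omega⟩
  obtain ⟨G, hG, hmix, hJ⟩ := exists_mem_selfAdjoint_condExp_eq ℬ 𝒜 J hHerm hTP hcompat
  refine ⟨G, hG, ?_, trOut_univ_of_condExp_eq_maxMixed hmix,
    fun i => ptr2_univ_eq_of_condExp_eq_embed (hJ i)⟩
  rw [← trace_condExp (∅, univ) G, hmix, trace_maxMixed]

/-- HPTP marginal problem, Choi form: a compatible family of
Hermitian trace-one Choi operators `J i` on subsets `ℬ i`, `𝒜 i` covering the
output and input index sets, each satisfying the trace-preservation condition
`Tr_{ℬ i} (J i) = 𝟙 / d^{|𝒜 i|}`, admits a global Hermitian trace-one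
operator `J` with `Tr_{I_B} J = 𝟙 / d^{|I_A|}` whose marginals are the `J i`. -/
theorem hptp_marginal_problem
    (d : ℕ) (hd : 1 ≤ d) (k : ℕ)
    (𝒜 : Fin k → Finset ιA) (ℬ : Fin k → Finset ιB)
    (hcoverA : Finset.univ.biUnion 𝒜 = Finset.univ)
    (hcoverB : Finset.univ.biUnion ℬ = Finset.univ)
    (J : ∀ i : Fin k,
      Matrix (({x // x ∈ ℬ i} → Fin d) × ({x // x ∈ 𝒜 i} → Fin d))
        (({x // x ∈ ℬ i} → Fin d) × ({x // x ∈ 𝒜 i} → Fin d)) ℂ)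
    (hHerm : ∀ i, (J i).IsHermitian)
    (hTr : ∀ i, (J i).trace = 1)
    (hTP : ∀ i, trOut (ℬ i) (𝒜 i) (J i) = (1 / (d : ℂ) ^ ((𝒜 i).card)) • 1)
    (hcompat : ∀ i j : Fin k,
      ptr2 (ℬ i) (ℬ i ∩ ℬ j) (𝒜 i) (𝒜 i ∩ 𝒜 j) (J i) =
        ptr2 (ℬ j) (ℬ i ∩ ℬ j) (𝒜 j) (𝒜 i ∩ 𝒜 j) (J j)) :
    ∃ Jglob : Matrix
        (({x // x ∈ (Finset.univ : Finset ιB)} → Fin d) ×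
          ({x // x ∈ (Finset.univ : Finset ιA)} → Fin d))
        (({x // x ∈ (Finset.univ : Finset ιB)} → Fin d) ×
          ({x // x ∈ (Finset.univ : Finset ιA)} → Fin d)) ℂ,
      Jglob.IsHermitian ∧ Jglob.trace = 1 ∧
      trOut Finset.univ Finset.univ Jglob =
        (1 / (d : ℂ) ^ ((Finset.univ : Finset ιA).card)) • 1 ∧
      ∀ i : Fin k, ptr2 Finset.univ (ℬ i) Finset.univ (𝒜 i) Jglob = J i :=
  hptp_marginal_problem_general d hd k 𝒜 ℬ J hHerm hTP hcompat
end
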